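/- arXiv:1010.2429 — 4 statements merged into one kernel-verified Lean document; each statement's English description precedes it below -/
import Mathlib

section
/- Let f : M → ℝ^{n+1} be an immersion of a closed oriented n-manifold with Gauss map G_f. If G_f(M) ≠ S^n, then the tangent bundle TM is trivial (M is parallelizable). -/
/-!
Pick a unit vector `p` missed by `G`. The reflection of `ℝⁿ⁺¹` exchanging `G q` and `p`
depends continuously on `q` precisely because `G q ≠ p`, and it carries the hyperplane
`(G q)ᗮ ⊇ range (df_q)` onto the fixed hyperplane `pᗮ ≅ ℝⁿ`. Composed with `df_q`, it gives a
continuous family of linear isomorphisms `T_qM ≃ ℝⁿ`, i.e. a trivialization of `TM`, and the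
preimages of the standard basis form a global frame.
-/

open scoped RealInnerProductSpace Manifold
open Set Function Module

theorem exists_norm_eq_one_forall_ne {V X : Type*} [NormedAddCommGroup V] {G : X → V}
    (hG : ∀ q, ‖G q‖ = 1) (hrange : range G ≠ Metric.sphere 0 1) :
    ∃ p : V, ‖p‖ = 1 ∧ ∀ q, G q ≠ p := by
  have hsub : range G ⊆ Metric.sphere 0 1 := by
    rintro _ ⟨q, rfl⟩
    simpa using hG q
  obtain ⟨p, hp, hpG⟩ := exists_of_ssubset (hsub.ssubset_of_ne hrange)
  exact ⟨p, by simpa using hp, fun q hq ↦ hpG ⟨q, hq⟩⟩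

section Reflection

variable {V : Type*} [NormedAddCommGroup V] [InnerProductSpace ℝ V]

theorem reflection_orthogonal_span_singleton_eq (u : V) :
    ((ℝ ∙ u)ᗮ.reflection : V →L[ℝ] V) =
      .id ℝ V - (2 / ‖u‖ ^ 2) • (innerSL ℝ u).smulRight u := by
  ext v
  simp only [ContinuousLinearEquiv.coe_coe, LinearIsometryEquiv.coe_toContinuousLinearEquiv,
    Submodule.reflection_orthogonal_apply, Submodule.reflection_singleton_apply,
    Real.ringHom_apply, neg_sub, sub_apply, ContinuousLinearMap.id_apply, smul_apply,
    ContinuousLinearMap.smulRight_apply, coe_innerSL_apply, sub_right_inj]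
  module

theorem continuous_reflection_orthogonal_span_singleton {X : Type*} [TopologicalSpace X]
    {w : X → V} (hw : Continuous w) (hw₀ : ∀ x, w x ≠ 0) :
    Continuous fun x ↦ ((ℝ ∙ w x)ᗮ.reflection : V →L[ℝ] V) := by
  simp_rw [reflection_orthogonal_span_singleton_eq]
  refine continuous_const.sub
    ((continuous_const.div (hw.norm.pow 2) fun x ↦ by simpa using hw₀ x).smul ?_)
  exact isBoundedBilinearMap_smulRight.continuous.comp
    (((innerSL ℝ).continuous.comp hw).prodMk hw)

theorem inner_reflection_orthogonal_span_sub {a b : V} (hab : ‖a‖ = ‖b‖) (y : V) :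
    ⟪b, (ℝ ∙ (a - b))ᗮ.reflection y⟫ = ⟪a, y⟫ := by
  simpa [Submodule.reflection_sub hab] using (ℝ ∙ (a - b))ᗮ.reflection.inner_map_map a y

theorem injective_orthogonalProjection_reflection_comp {E : Type*} [NormedAddCommGroup E]
    [NormedSpace ℝ E] {a b : V} (hab : ‖a‖ = ‖b‖) {L : E →L[ℝ] V} (hL : Injective L)
    (hLa : ∀ x, ⟪a, L x⟫ = 0) :
    Injective ((ℝ ∙ b)ᗮ.orthogonalProjectionOnto ∘L
      ((ℝ ∙ (a - b))ᗮ.reflection : V →L[ℝ] V) ∘L L) := by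
  have hmem x : (ℝ ∙ (a - b))ᗮ.reflection (L x) ∈ (ℝ ∙ b)ᗮ := by
    rw [Submodule.mem_orthogonal_singleton_iff_inner_right,
      inner_reflection_orthogonal_span_sub hab, hLa]
  intro x y hxy
  apply hL
  apply (ℝ ∙ (a - b))ᗮ.reflection.injective
  rw [← Submodule.starProjection_eq_self_iff.2 (hmem x),
    ← Submodule.starProjection_eq_self_iff.2 (hmem y), Submodule.starProjection_apply,
    Submodule.starProjection_apply]
  exact congrArg Subtype.val hxy

end Reflection

theorem finrank_orthogonal_span_singleton_euclideanSpace {n : ℕ}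
    {p : EuclideanSpace ℝ (Fin (n + 1))} (hp : p ≠ 0) :
    finrank ℝ (ℝ ∙ p)ᗮ = finrank ℝ (EuclideanSpace ℝ (Fin n)) := by
  have : Fact (finrank ℝ (EuclideanSpace ℝ (Fin (n + 1))) = n + 1) :=
    ⟨finrank_euclideanSpace_fin⟩
  rw [Submodule.finrank_orthogonal_span_singleton (n := n) hp, finrank_euclideanSpace_fin]

section TangentFrame

variable {E : Type*} [NormedAddCommGroup E] [NormedSpace ℝ E] {H : Type*} [TopologicalSpace H]
  {I : ModelWithCorners ℝ E H} {M : Type*} [TopologicalSpace M] [ChartedSpace H M]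
  [IsManifold I 1 M] {F : Type*} [NormedAddCommGroup F] [NormedSpace ℝ F]

theorem tangentCoordChange_tangentCoordChange {x y z : M} {v : E}
    (hz : z ∈ (extChartAt I x).source ∩ (extChartAt I y).source) :
    tangentCoordChange I y x z (tangentCoordChange I x y z v) = v := by
  rw [tangentCoordChange_comp ⟨hz, hz.1⟩, tangentCoordChange_self hz.1]

theorem continuousAt_mfderiv_comp_tangentCoordChange {f : M → F}
    (hf : ContMDiff I 𝓘(ℝ, F) 1 f) (q₀ : M) :
    ContinuousAt
      (fun q ↦ (show E →L[ℝ] F from mfderiv I 𝓘(ℝ, F) f q) ∘L tangentCoordChange I q₀ q q) q₀ := by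
  refine ((hf q₀).mfderiv_const (m := 0) le_rfl).continuousAt.congr ?_
  filter_upwards [chart_source_mem_nhds H q₀] with q hq
  refine (inTangentCoordinates_eq (I := I) (I' := 𝓘(ℝ, F)) id f (mfderiv I 𝓘(ℝ, F) f) hq
    (mem_univ _)).trans ?_
  rw [tangentBundleCore_coordChange_model_space]
  rfl

/-- In the chart at `q₀`, the section is `q ↦ (Φ q ∘L tangentCoordChange I q₀ q q)⁻¹ w`, and
inversion of continuous linear equivalences is continuous. -/
theorem continuous_tangentBundle_mk_symm_apply [CompleteSpace E] (Φ : M → E ≃L[ℝ] F)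
    (hΦ : ∀ q₀, ContinuousAt (fun q ↦ (Φ q : E →L[ℝ] F) ∘L tangentCoordChange I q₀ q q) q₀)
    (w : F) :
    Continuous fun q ↦ (⟨q, (Φ q).symm w⟩ : TangentBundle I M) := by
  refine continuous_iff_continuousAt.2 fun q₀ ↦ ?_
  rw [FiberBundle.continuousAt_totalSpace]
  refine ⟨continuousAt_id, ?_⟩
  set P : M → E →L[ℝ] F := fun q ↦ (Φ q : E →L[ℝ] F) ∘L tangentCoordChange I q₀ q q
  have hP₀ : P q₀ = Φ q₀ := by
    ext v
    exact congrArg (Φ q₀) (tangentCoordChange_self (mem_extChartAt_source q₀))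
  have hinverse : ContinuousAt (fun q ↦ (P q).inverse w) q₀ := by
    have := (contDiffAt_map_inverse (n := 0) (Φ q₀)).continuousAt
    rw [← hP₀] at this
    exact (this.comp (hΦ q₀)).clm_apply continuousAt_const
  refine hinverse.congr ?_
  filter_upwards [extChartAt_source_mem_nhds (I := I) q₀] with q hq
  have hq' : q ∈ (extChartAt I q₀).source ∩ (extChartAt I q).source :=
    ⟨hq, mem_extChartAt_source q⟩
  let T : E ≃L[ℝ] E := .equivOfInverse (tangentCoordChange I q₀ q q)
    (tangentCoordChange I q q₀ q) (fun _ ↦ tangentCoordChange_tangentCoordChange hq')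
    (fun _ ↦ tangentCoordChange_tangentCoordChange hq'.symm)
  have hPT : P q = (T.trans (Φ q) : E →L[ℝ] F) := rfl
  rw [hPT, ContinuousLinearMap.inverse_equiv]
  rfl

theorem exists_tangentFrame_of_continuousAt_comp_tangentCoordChange [CompleteSpace E]
    {ι : Type*} (b : Basis ι ℝ F) (Φ : M → E ≃L[ℝ] F)
    (hΦ : ∀ q₀, ContinuousAt (fun q ↦ (Φ q : E →L[ℝ] F) ∘L tangentCoordChange I q₀ q q) q₀) :
    ∃ v : ι → ∀ q : M, TangentSpace I q,
      (∀ i, Continuous fun q ↦ (⟨q, v i q⟩ : TangentBundle I M)) ∧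
      ∀ q : M, LinearIndependent ℝ (fun i ↦ v i q) ∧
        Submodule.span ℝ (range fun i ↦ v i q) = ⊤ := by
  refine ⟨fun i q ↦ (Φ q).symm (b i),
    fun i ↦ continuous_tangentBundle_mk_symm_apply Φ hΦ (b i), fun q ↦ ?_⟩
  let b' := b.map (Φ q).symm.toLinearEquiv
  have hb' : (fun i ↦ (Φ q).symm (b i)) = b' := by
    ext i
    simp [b']
  rw [hb']
  exact ⟨b'.linearIndependent, b'.span_eq⟩

end TangentFrame

theorem parallelizable_of_gauss_not_surjective_general {n : ℕ}
    {M : Type*} [TopologicalSpace M] [ChartedSpace (EuclideanSpace ℝ (Fin n)) M]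
    [IsManifold (𝓡 n) (⊤ : ℕ∞) M]
    (f : M → EuclideanSpace ℝ (Fin (n + 1)))
    (hf : ContMDiff (𝓡 n) 𝓘(ℝ, EuclideanSpace ℝ (Fin (n + 1))) (⊤ : ℕ∞) f)
    (himm : ∀ q, Function.Injective
      (mfderiv (𝓡 n) 𝓘(ℝ, EuclideanSpace ℝ (Fin (n + 1))) f q))
    (G : M → EuclideanSpace ℝ (Fin (n + 1))) (hGc : Continuous G)
    (hGu : ∀ q, ‖G q‖ = 1)
    (hGn : ∀ q (v : TangentSpace (𝓡 n) q),
      ⟪G q, mfderiv (𝓡 n) 𝓘(ℝ, EuclideanSpace ℝ (Fin (n + 1))) f q v⟫ = 0)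
    (hGns : Set.range G ≠ Metric.sphere (0 : EuclideanSpace ℝ (Fin (n + 1))) 1) :
    ∃ v : Fin n → (∀ q : M, TangentSpace (𝓡 n) q),
      (∀ i, Continuous fun q => (⟨q, v i q⟩ : TangentBundle (𝓡 n) M)) ∧
      ∀ q : M, LinearIndependent ℝ (fun i => v i q) ∧
        Submodule.span ℝ (Set.range fun i => v i q) = ⊤ := by
  obtain ⟨p, hp, hGp⟩ := exists_norm_eq_one_forall_ne hGu hGns
  have hp₀ : p ≠ 0 := by rintro rfl; simp at hp
  let e : (ℝ ∙ p)ᗮ ≃L[ℝ] EuclideanSpace ℝ (Fin n) :=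
    .ofFinrankEq (finrank_orthogonal_span_singleton_euclideanSpace hp₀)
  let R q : EuclideanSpace ℝ (Fin (n + 1)) →L[ℝ] EuclideanSpace ℝ (Fin (n + 1)) :=
    (ℝ ∙ (G q - p))ᗮ.reflection
  let Df q : EuclideanSpace ℝ (Fin n) →L[ℝ] EuclideanSpace ℝ (Fin (n + 1)) :=
    mfderiv (𝓡 n) 𝓘(ℝ, EuclideanSpace ℝ (Fin (n + 1))) f q
  let Ψ q : EuclideanSpace ℝ (Fin n) →L[ℝ] EuclideanSpace ℝ (Fin n) :=
    (e : (ℝ ∙ p)ᗮ →L[ℝ] EuclideanSpace ℝ (Fin n)) ∘L (ℝ ∙ p)ᗮ.orthogonalProjectionOnto ∘L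
      R q ∘L Df q
  have hinj q : Injective (Ψ q) := by
    rw [ContinuousLinearMap.coe_comp]
    exact e.injective.comp
      (injective_orthogonalProjection_reflection_comp (by rw [hGu, hp]) (himm q) (hGn q))
  let Φ q := (LinearEquiv.ofInjectiveEndo (Ψ q).toLinearMap (hinj q)).toContinuousLinearEquiv
  refine exists_tangentFrame_of_continuousAt_comp_tangentCoordChange
    (EuclideanSpace.basisFun (Fin n) ℝ).toBasis Φ fun q₀ ↦ ?_
  have hR : Continuous R :=
    continuous_reflection_orthogonal_span_singleton (hGc.sub continuous_const)
      fun q ↦ sub_ne_zero.2 (hGp q)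
  have hΦΨ q : (Φ q : EuclideanSpace ℝ (Fin n) →L[ℝ] EuclideanSpace ℝ (Fin n)) = Ψ q := rfl
  simp only [hΦΨ, Ψ, ContinuousLinearMap.comp_assoc]
  exact continuousAt_const.clm_comp (continuousAt_const.clm_comp (hR.continuousAt.clm_comp
    (continuousAt_mfderiv_comp_tangentCoordChange (hf.of_le (mod_cast le_top)) q₀)))

/-- If a closed oriented `n`-manifold `M` admits a smooth immersion `f` into `ℝⁿ⁺¹` whose
Gauss map `G_f` is not surjective onto the sphere, then `M` is parallelizable: its tangent
bundle admits a global continuous frame. -/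
theorem parallelizable_of_gauss_not_surjective {n : ℕ}
    {M : Type*} [TopologicalSpace M] [ChartedSpace (EuclideanSpace ℝ (Fin n)) M]
    [IsManifold (𝓡 n) (⊤ : ℕ∞) M] [CompactSpace M]
    (f : M → EuclideanSpace ℝ (Fin (n + 1)))
    (hf : ContMDiff (𝓡 n) 𝓘(ℝ, EuclideanSpace ℝ (Fin (n + 1))) (⊤ : ℕ∞) f)
    (himm : ∀ q, Function.Injective
      (mfderiv (𝓡 n) 𝓘(ℝ, EuclideanSpace ℝ (Fin (n + 1))) f q))
    (G : M → EuclideanSpace ℝ (Fin (n + 1))) (hGc : Continuous G)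
    (hGu : ∀ q, ‖G q‖ = 1)
    (hGn : ∀ q (v : TangentSpace (𝓡 n) q),
      ⟪G q, mfderiv (𝓡 n) 𝓘(ℝ, EuclideanSpace ℝ (Fin (n + 1))) f q v⟫ = 0)
    (hGns : Set.range G ≠ Metric.sphere (0 : EuclideanSpace ℝ (Fin (n + 1))) 1) :
    ∃ v : Fin n → (∀ q : M, TangentSpace (𝓡 n) q),
      (∀ i, Continuous fun q => (⟨q, v i q⟩ : TangentBundle (𝓡 n) M)) ∧
      ∀ q : M, LinearIndependent ℝ (fun i => v i q) ∧
        Submodule.span ℝ (Set.range fun i => v i q) = ⊤ :=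
  parallelizable_of_gauss_not_surjective_general f hf himm G hGc hGu hGn hGns
end

section
/- Let f₀ : M₀ → ℝ^{n-k} × {0} ⊂ ℝ^{n-k+1} be a smooth immersion of a manifold M₀ whose image is disjoint from the subspace L = ℝ^{n-k-1} × {(0,0)}. Then the spun map f₁ : M₀ × S¹ → ℝ^{n-k+1}, given by rotating f₀ about L, i.e., f₁(q,t) = (f₀¹(q), ..., f₀^{n-k-1}(q), f₀^{n-k}(q) cos t, −f₀^{n-k}(q) sin t), is a smooth immersion. -/
/-!
Write `f₀ = (g, h)`. The spun map is `((x, r), z) ↦ (x, r re z, -r im z)` composed with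
`f₀ × ι`, where `ι : S¹ → ℂ` is the inclusion. The differential of the first map at
`((x, r), z)` sends `((a, b), w)` to `(a, b re z + r re w, -(b im z + r im w))`, which vanishes
only if `a = 0` and `b z + r w = 0`. A tangent vector `w` of the circle at `z` is orthogonal to
`z`, so pairing with `z` gives `b |z|² = 0`, hence `b = 0` and, as `r ≠ 0`, `w = 0`. Thus the
differential of the spun map is injective because those of `f₀` and of `ι` are.
-/

open scoped Manifold

section Spin

variable {E : Type*} [NormedAddCommGroup E] [NormedSpace ℝ E]

/-- For `z = exp (i t)` this rotates `(x, r, 0)` by the angle `-t` in the last two coordinates. -/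
def spin (p : (E × ℝ) × ℂ) : E × ℝ × ℝ :=
  (p.1.1, p.1.2 * p.2.re, -p.1.2 * p.2.im)

theorem contDiff_spin {n : WithTop ℕ∞} : ContDiff ℝ n (spin (E := E)) := by
  have hr : ContDiff ℝ n fun p : (E × ℝ) × ℂ => p.1.2 := contDiff_fst.snd
  exact contDiff_fst.fst.prodMk ((hr.mul (Complex.reCLM.contDiff.comp contDiff_snd)).prodMk
    (hr.neg.mul (Complex.imCLM.contDiff.comp contDiff_snd)))

open ContinuousLinearMap in
noncomputable def spinDeriv (r : ℝ) (z : ℂ) : (E × ℝ) × ℂ →L[ℝ] E × ℝ × ℝ :=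
  let b : (E × ℝ) × ℂ →L[ℝ] ℝ := (snd ℝ E ℝ).comp (fst _ _ _)
  let w : (E × ℝ) × ℂ →L[ℝ] ℂ := snd _ _ _
  ((fst ℝ E ℝ).comp (fst _ _ _)).prod
    ((z.re • b + r • Complex.reCLM.comp w).prod (-(z.im • b + r • Complex.imCLM.comp w)))

@[simp]
theorem spinDeriv_apply (r : ℝ) (z : ℂ) (v : (E × ℝ) × ℂ) :
    spinDeriv r z v = (v.1.1, v.1.2 * z.re + r * v.2.re, -(v.1.2 * z.im + r * v.2.im)) := by
  simp [spinDeriv, mul_comm]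

theorem hasFDerivAt_spin (x : E) (r : ℝ) (z : ℂ) :
    HasFDerivAt spin (spinDeriv r z) ((x, r), z) := by
  have hx : HasFDerivAt (fun p : (E × ℝ) × ℂ => p.1.1) _ ((x, r), z) :=
    (hasFDerivAt_fst (𝕜 := ℝ)).fst
  have hr : HasFDerivAt (fun p : (E × ℝ) × ℂ => p.1.2) _ ((x, r), z) :=
    (hasFDerivAt_fst (𝕜 := ℝ)).snd
  have hz : HasFDerivAt (fun p : (E × ℝ) × ℂ => p.2) _ ((x, r), z) := hasFDerivAt_snd (𝕜 := ℝ)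
  have hre : HasFDerivAt (fun p : (E × ℝ) × ℂ => p.1.2 * p.2.re) _ ((x, r), z) :=
    hr.mul (Complex.reCLM.hasFDerivAt.comp _ hz)
  have him : HasFDerivAt (fun p : (E × ℝ) × ℂ => -p.1.2 * p.2.im) _ ((x, r), z) :=
    hr.neg.mul (Complex.imCLM.hasFDerivAt.comp _ hz)
  refine (hx.prodMk (hre.prodMk him)).congr_fderiv ?_
  ext v <;> simp

theorem eq_zero_of_spinDeriv_eq_zero {r : ℝ} {z : ℂ} {v : (E × ℝ) × ℂ} (hr : r ≠ 0) (hz : z ≠ 0)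
    (hv : inner ℝ z v.2 = 0) (h : spinDeriv r z v = 0) : v = 0 := by
  obtain ⟨⟨a, b⟩, w⟩ := v
  simp only [spinDeriv_apply, Prod.mk_eq_zero, neg_eq_zero] at h
  obtain ⟨rfl, hre, him⟩ := h
  rw [Complex.inner, Complex.mul_re, Complex.conj_re, Complex.conj_im] at hv
  obtain rfl : b = 0 := by
    have hb : b * Complex.normSq z = 0 := by
      rw [Complex.normSq_apply]
      linear_combination z.re * hre + z.im * him - r * hv
    exact (mul_eq_zero.1 hb).resolve_right (Complex.normSq_pos.2 hz).ne'
  obtain rfl : w = 0 := by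
    apply Complex.ext
    · exact (mul_eq_zero.1 (by linarith)).resolve_left hr
    · exact (mul_eq_zero.1 (by linarith)).resolve_left hr
  rfl

end Spin

section Circle

attribute [local instance] finrank_real_complex_fact'

theorem contMDiff_coe_circle {n : WithTop ℕ∞} :
    ContMDiff (𝓡 1) 𝓘(ℝ, ℂ) n (fun z : Circle => (z : ℂ)) :=
  contMDiff_coe_sphere (E := ℂ)

theorem inner_mfderiv_coe_circle (t : Circle) (v : TangentSpace (𝓡 1) t) :
    inner ℝ (t : ℂ) (mfderiv (𝓡 1) 𝓘(ℝ, ℂ) (fun z : Circle => (z : ℂ)) t v) = 0 := by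
  have hv : mvfderiv (𝓡 1) (fun z : Circle => (z : ℂ)) t v ∈ (ℝ ∙ (t : ℂ))ᗮ :=
    range_mvfderiv_subtypeVal (E := ℂ) (n := 1) t ▸ ⟨v, rfl⟩
  exact Submodule.mem_orthogonal_singleton_iff_inner_right.1 hv

theorem injective_mfderiv_coe_circle (t : Circle) :
    Function.Injective (mfderiv (𝓡 1) 𝓘(ℝ, ℂ) (fun z : Circle => (z : ℂ)) t) :=
  injective_mvfderiv_subtypeVal_sphere (E := ℂ) t

end Circle

section Spun

variable {E : Type*} [NormedAddCommGroup E] [NormedSpace ℝ E]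
  {F H : Type*} [NormedAddCommGroup F] [NormedSpace ℝ F] [TopologicalSpace H]
  {I : ModelWithCorners ℝ F H} {M : Type*} [TopologicalSpace M] [ChartedSpace H M]

def spun (f : M → E × ℝ) (p : M × Circle) : E × ℝ × ℝ :=
  spin (f p.1, (p.2 : ℂ))

theorem ContMDiff.spun {n : WithTop ℕ∞} {f : M → E × ℝ} (hf : ContMDiff I 𝓘(ℝ, E × ℝ) n f) :
    ContMDiff (I.prod (𝓡 1)) 𝓘(ℝ, E × ℝ × ℝ) n (spun f) :=
  contDiff_spin.contMDiff.comp
    ((hf.comp contMDiff_fst).prodMk_space (contMDiff_coe_circle.comp contMDiff_snd))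

theorem MDifferentiableAt.hasMFDerivAt_spun {f : M → E × ℝ} {p : M × Circle}
    (hf : MDifferentiableAt I 𝓘(ℝ, E × ℝ) f p.1) :
    HasMFDerivAt (I.prod (𝓡 1)) 𝓘(ℝ, E × ℝ × ℝ) (spun f) p
      ((spinDeriv (f p.1).2 p.2).comp
        (((mfderiv I 𝓘(ℝ, E × ℝ) f p.1).comp (ContinuousLinearMap.fst ℝ F _)).prod
          ((mfderiv (𝓡 1) 𝓘(ℝ, ℂ) (fun z : Circle => (z : ℂ)) p.2).comp
            (ContinuousLinearMap.snd ℝ F (EuclideanSpace ℝ (Fin 1)))))) := by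
  have h₁ := hf.hasMFDerivAt.comp p (hasMFDerivAt_fst (I := I) (I' := 𝓡 1) p)
  have h₂ := ((contMDiff_coe_circle (n := 1)).mdifferentiableAt one_ne_zero).hasMFDerivAt.comp p
    (hasMFDerivAt_snd (I := I) (I' := 𝓡 1) p)
  have h : HasMFDerivAt (I.prod (𝓡 1)) 𝓘(ℝ, (E × ℝ) × ℂ)
      (fun p : M × Circle => (f p.1, (p.2 : ℂ))) p _ :=
    ⟨h₁.1.prodMk h₂.1, h₁.2.prodMk h₂.2⟩
  exact (hasFDerivAt_spin (f p.1).1 (f p.1).2 p.2).hasMFDerivAt.comp p h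

theorem injective_mfderiv_spun {f : M → E × ℝ} {p : M × Circle}
    (hf : MDifferentiableAt I 𝓘(ℝ, E × ℝ) f p.1)
    (himm : Function.Injective (mfderiv I 𝓘(ℝ, E × ℝ) f p.1)) (hp : (f p.1).2 ≠ 0) :
    Function.Injective (mfderiv (I.prod (𝓡 1)) 𝓘(ℝ, E × ℝ × ℝ) (spun f) p) := by
  rw [hf.hasMFDerivAt_spun.mfderiv]
  refine (injective_iff_map_eq_zero _).2 fun v hv => ?_
  obtain ⟨h₁, h₂⟩ : mfderiv I 𝓘(ℝ, E × ℝ) f p.1 v.1 = 0 ∧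
      mfderiv (𝓡 1) 𝓘(ℝ, ℂ) (fun z : Circle => (z : ℂ)) p.2 v.2 = 0 :=
    Prod.mk_eq_zero.1 <| eq_zero_of_spinDeriv_eq_zero hp (Circle.coe_ne_zero p.2)
      (inner_mfderiv_coe_circle p.2 v.2) hv
  exact Prod.ext (himm (h₁.trans (map_zero _).symm))
    (injective_mfderiv_coe_circle p.2 (h₂.trans (map_zero _).symm))

end Spun

theorem spun_immersion_general {d m : ℕ}
    {M₀ : Type*} [TopologicalSpace M₀] [ChartedSpace (EuclideanSpace ℝ (Fin d)) M₀]
    (g : M₀ → EuclideanSpace ℝ (Fin m)) (h : M₀ → ℝ)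
    (hf₀ : ContMDiff (𝓡 d) 𝓘(ℝ, EuclideanSpace ℝ (Fin m) × ℝ) (⊤ : ℕ∞) (fun q => (g q, h q)))
    (himm : ∀ q, Function.Injective
      (mfderiv (𝓡 d) 𝓘(ℝ, EuclideanSpace ℝ (Fin m) × ℝ) (fun q' => (g q', h q')) q))
    (hh : ∀ q, h q ≠ 0)
    (f₁ : M₀ × Circle → EuclideanSpace ℝ (Fin m) × ℝ × ℝ)
    (hf₁ : f₁ = fun p => (g p.1, h p.1 * (p.2 : ℂ).re, -(h p.1) * (p.2 : ℂ).im)) :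
    ContMDiff ((𝓡 d).prod (𝓡 1)) 𝓘(ℝ, EuclideanSpace ℝ (Fin m) × ℝ × ℝ) (⊤ : ℕ∞) f₁ ∧
    ∀ p : M₀ × Circle, Function.Injective
      (mfderiv ((𝓡 d).prod (𝓡 1)) 𝓘(ℝ, EuclideanSpace ℝ (Fin m) × ℝ × ℝ) f₁ p) := by
  obtain rfl : f₁ = spun fun q => (g q, h q) := hf₁
  exact ⟨hf₀.spun, fun p =>
    injective_mfderiv_spun (hf₀.mdifferentiableAt (by simp)) (himm p.1) (hh p.1)⟩

/-- Spinning an immersion: if `f₀ = (g, h) : M₀ → ℝ^{m} × ℝ = ℝ^{m+1}` is a smooth immersion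
whose image avoids the subspace `L = ℝ^{m} × {(0,0)}` of `ℝ^{m+2}` (i.e. the last coordinate
`h` never vanishes), then the spun map
`f₁(q, t) = (g q, h q * cos t, -(h q) * sin t) : M₀ × S¹ → ℝ^{m+2}` is a smooth immersion. -/
theorem spun_immersion {d m : ℕ}
    {M₀ : Type*} [TopologicalSpace M₀] [ChartedSpace (EuclideanSpace ℝ (Fin d)) M₀]
    [IsManifold (𝓡 d) ((⊤ : ℕ∞) : WithTop ℕ∞) M₀]
    (g : M₀ → EuclideanSpace ℝ (Fin m)) (h : M₀ → ℝ)
    (hf₀ : ContMDiff (𝓡 d) 𝓘(ℝ, EuclideanSpace ℝ (Fin m) × ℝ) (⊤ : ℕ∞) (fun q => (g q, h q)))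
    (himm : ∀ q, Function.Injective
      (mfderiv (𝓡 d) 𝓘(ℝ, EuclideanSpace ℝ (Fin m) × ℝ) (fun q' => (g q', h q')) q))
    (hh : ∀ q, h q ≠ 0)
    (f₁ : M₀ × Circle → EuclideanSpace ℝ (Fin m) × ℝ × ℝ)
    (hf₁ : f₁ = fun p => (g p.1, h p.1 * (p.2 : ℂ).re, -(h p.1) * (p.2 : ℂ).im)) :
    ContMDiff ((𝓡 d).prod (𝓡 1)) 𝓘(ℝ, EuclideanSpace ℝ (Fin m) × ℝ × ℝ) (⊤ : ℕ∞) f₁ ∧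
    ∀ p : M₀ × Circle, Function.Injective
      (mfderiv ((𝓡 d).prod (𝓡 1)) 𝓘(ℝ, EuclideanSpace ℝ (Fin m) × ℝ × ℝ) f₁ p) :=
  spun_immersion_general g h hf₀ himm hh f₁ hf₁
end

section
/- For ε = δ = 1/8, the map F : (ℝ/2πℤ)² → ℝ³ given by F(θ, t) = f(θ) + ε (E_δ¹(t) N₁(θ) + E_δ²(t) N₂(θ)), where f(θ) = (cos θ, sin θ, 0), E_δ(t) = (cos t, δ sin 2t), N₂(θ) = (cos θ, sin θ, cos 3θ)/√(1 + cos²3θ), and N₁(θ) = f'(θ) × N₂(θ), is a smooth immersion of the torus into ℝ³. -/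
open Real Matrix

noncomputable def tG (θ : ℝ) : ℝ := (Real.sqrt (1 + Real.cos (3*θ)^2))⁻¹

noncomputable def tH (p : ℝ × ℝ) : ℝ :=
  (1/8) * tG p.1 * (Real.cos (3*p.1) * Real.cos p.2 + (1/8) * Real.sin (2*p.2))

noncomputable def tF (p : ℝ × ℝ) : Fin 3 → ℝ :=
  ![Real.cos p.1 * (1 + tH p), Real.sin p.1 * (1 + tH p),
    (1/8) * tG p.1 * ((1/8) * Real.sin (2*p.2) * Real.cos (3*p.1) - Real.cos p.2)]

lemma contDiff_tG : ContDiff ℝ (⊤ : ℕ∞) tG := by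
  have h1 : ContDiff ℝ (⊤ : ℕ∞) (fun θ : ℝ => 1 + Real.cos (3*θ)^2) :=
    contDiff_const.add ((Real.contDiff_cos.comp (contDiff_const.mul contDiff_id)).pow 2)
  have h2 : ContDiff ℝ (⊤ : ℕ∞) (fun θ : ℝ => Real.sqrt (1 + Real.cos (3*θ)^2)) :=
    h1.sqrt (fun x => by positivity)
  exact h2.inv (fun x => (Real.sqrt_pos.mpr (by positivity)).ne')

lemma tG_pos (θ : ℝ) : 0 < tG θ := by
  unfold tG
  exact inv_pos.mpr (Real.sqrt_pos.mpr (by positivity))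

lemma tG_le_one (θ : ℝ) : tG θ ≤ 1 := by
  unfold tG
  rw [inv_le_one_iff₀]
  right
  nlinarith [Real.sq_sqrt (show (0:ℝ) ≤ 1 + Real.cos (3*θ)^2 by positivity),
    Real.sqrt_nonneg (1 + Real.cos (3*θ)^2), sq_nonneg (Real.cos (3*θ))]

lemma contDiff_tH : ContDiff ℝ (⊤ : ℕ∞) tH := by
  unfold tH
  have hfst : ContDiff ℝ (⊤ : ℕ∞) (fun p : ℝ × ℝ => p.1) := contDiff_fst
  have hsnd : ContDiff ℝ (⊤ : ℕ∞) (fun p : ℝ × ℝ => p.2) := contDiff_snd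
  exact (contDiff_const.mul (contDiff_tG.comp hfst)).mul
    (((Real.contDiff_cos.comp (contDiff_const.mul hfst)).mul
      (Real.contDiff_cos.comp hsnd)).add
      (contDiff_const.mul (Real.contDiff_sin.comp (contDiff_const.mul hsnd))))

lemma contDiff_tF : ContDiff ℝ (⊤ : ℕ∞) tF := by
  rw [contDiff_pi]
  have hfst : ContDiff ℝ (⊤ : ℕ∞) (fun p : ℝ × ℝ => p.1) := contDiff_fst
  have hsnd : ContDiff ℝ (⊤ : ℕ∞) (fun p : ℝ × ℝ => p.2) := contDiff_snd
  intro i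
  fin_cases i
  · exact (Real.contDiff_cos.comp hfst).mul (contDiff_const.add contDiff_tH)
  · exact (Real.contDiff_sin.comp hfst).mul (contDiff_const.add contDiff_tH)
  · exact (contDiff_const.mul (contDiff_tG.comp hfst)).mul
      (((contDiff_const.mul (Real.contDiff_sin.comp (contDiff_const.mul hsnd))).mul
        (Real.contDiff_cos.comp (contDiff_const.mul hfst))).sub
        (Real.contDiff_cos.comp hsnd))

lemma tH_bound (p : ℝ × ℝ) : 0 < 1 + tH p := by
  have hg0 := tG_pos p.1
  have hg1 := tG_le_one p.1
  have h1 := Real.neg_one_le_cos p.2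
  have h2 := Real.cos_le_one p.2
  have h3 := Real.neg_one_le_cos (3*p.1)
  have h4 := Real.cos_le_one (3*p.1)
  have h5 := Real.neg_one_le_sin (2*p.2)
  have h6 := Real.sin_le_one (2*p.2)
  have key : Real.cos (3*p.1) * Real.cos p.2 + (1/8) * Real.sin (2*p.2) ≥ -(9/8) := by
    nlinarith [sq_nonneg (Real.cos (3*p.1) + Real.cos p.2)]
  unfold tH
  nlinarith [mul_le_of_le_one_left (show (0:ℝ) ≤ 9/8 by norm_num) hg1,
    mul_le_mul_of_nonneg_left key hg0.le]

/-- For `ε = δ = 1/8`, the doubly `2π`-periodic map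
`F(θ,t) = f(θ) + ε (E_δ¹(t) N₁(θ) + E_δ²(t) N₂(θ))`, where `f(θ) = (cos θ, sin θ, 0)`,
`E_δ(t) = (cos t, δ sin 2t)`, `N₂(θ) = (cos θ, sin θ, cos 3θ)/√(1 + cos² 3θ)` and
`N₁(θ) = f'(θ) ×₃ N₂(θ)`, is a smooth immersion of the torus into `ℝ³`. -/
theorem explicit_torus_immersion
    (N₂ : ℝ → Fin 3 → ℝ)
    (hN₂ : N₂ = fun θ => (Real.sqrt (1 + Real.cos (3 * θ) ^ 2))⁻¹ •
      ![Real.cos θ, Real.sin θ, Real.cos (3 * θ)])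
    (N₁ : ℝ → Fin 3 → ℝ)
    (hN₁ : N₁ = fun θ => crossProduct ![-Real.sin θ, Real.cos θ, 0] (N₂ θ))
    (F : ℝ × ℝ → Fin 3 → ℝ)
    (hF : F = fun p => ![Real.cos p.1, Real.sin p.1, 0] +
      (1 / 8 : ℝ) • (Real.cos p.2 • N₁ p.1 +
        ((1 / 8 : ℝ) * Real.sin (2 * p.2)) • N₂ p.1)) :
    ContDiff ℝ (⊤ : ℕ∞) F ∧ ∀ p : ℝ × ℝ, Function.Injective (fderiv ℝ F p) := by
  have hFeq : F = tF := by
    subst hN₂ hN₁ hF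
    funext p i
    fin_cases i
    · simp [tF, tH, tG, cross_apply, Matrix.smul_cons, smul_eq_mul]
      ring_nf
    · simp [tF, tH, tG, cross_apply, Matrix.smul_cons, smul_eq_mul]
      ring_nf
    · simp [tF, tH, tG, cross_apply, Matrix.smul_cons, smul_eq_mul]
      ring_nf
      linear_combination (Real.cos p.2 * (Real.sqrt (1 + Real.cos (p.1*3)^2))⁻¹ * (-1/8)) *
        Real.sin_sq_add_cos_sq p.1
  subst hFeq
  refine ⟨contDiff_tF, ?_⟩
  rintro ⟨θ, t⟩
  have hcdθ : ContDiff ℝ (⊤ : ℕ∞) (fun x : ℝ => tH (x, t)) :=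
    contDiff_tH.comp (contDiff_id.prodMk contDiff_const)
  set Hθ : ℝ := deriv (fun x : ℝ => tH (x, t)) θ with hHθdef
  have hdHθ : HasDerivAt (fun x : ℝ => tH (x, t)) Hθ θ :=
    ((hcdθ.differentiable (by simp)) θ).hasDerivAt
  have hcd3 : ContDiff ℝ (⊤ : ℕ∞) (fun x : ℝ =>
      (1/8) * tG x * ((1/8) * Real.sin (2*t) * Real.cos (3*x) - Real.cos t)) :=
    (contDiff_const.mul contDiff_tG).mul
      (((contDiff_const.mul (Real.contDiff_cos.comp (contDiff_const.mul contDiff_id)))).sub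
        contDiff_const)
  set D3 : ℝ := deriv (fun x : ℝ =>
      (1/8) * tG x * ((1/8) * Real.sin (2*t) * Real.cos (3*x) - Real.cos t)) θ with hD3def
  have hdD3 : HasDerivAt (fun x : ℝ =>
      (1/8) * tG x * ((1/8) * Real.sin (2*t) * Real.cos (3*x) - Real.cos t)) D3 θ :=
    ((hcd3.differentiable (by simp)) θ).hasDerivAt
  set v : Fin 3 → ℝ := ![-Real.sin θ * (1 + tH (θ, t)) + Real.cos θ * Hθ,
    Real.cos θ * (1 + tH (θ, t)) + Real.sin θ * Hθ, D3] with hvdef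
  have hv : HasDerivAt (fun x : ℝ => tF (x, t)) v θ := by
    rw [hasDerivAt_pi]
    intro i
    fin_cases i
    · show HasDerivAt (fun x : ℝ => Real.cos x * (1 + tH (x, t)))
        (-Real.sin θ * (1 + tH (θ, t)) + Real.cos θ * Hθ) θ
      have := (Real.hasDerivAt_cos θ).mul ((hasDerivAt_const θ (1:ℝ)).add hdHθ)
      exact this.congr_deriv (by simp only [Pi.add_apply]; ring)
    · show HasDerivAt (fun x : ℝ => Real.sin x * (1 + tH (x, t)))
        (Real.cos θ * (1 + tH (θ, t)) + Real.sin θ * Hθ) θ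
      have := (Real.hasDerivAt_sin θ).mul ((hasDerivAt_const θ (1:ℝ)).add hdHθ)
      exact this.congr_deriv (by simp only [Pi.add_apply]; ring)
    · exact hdD3
  have hsin2 : HasDerivAt (fun y : ℝ => Real.sin (2*y)) (2 * Real.cos (2*t)) t := by
    have := (Real.hasDerivAt_sin (2*t)).comp t ((hasDerivAt_id t).const_mul 2)
    exact this.congr_deriv (by ring)
  set Ht : ℝ := (1/8) * tG θ *
    (Real.cos (3*θ) * (-Real.sin t) + (1/8) * (2 * Real.cos (2*t))) with hHtdef
  have hdHt : HasDerivAt (fun y : ℝ => tH (θ, y)) Ht t := by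
    have := (((Real.hasDerivAt_cos t).const_mul (Real.cos (3*θ))).add
      (hsin2.const_mul (1/8))).const_mul ((1/8) * tG θ)
    exact this
  set W3 : ℝ := (1/8) * tG θ *
    ((1/8) * (2 * Real.cos (2*t)) * Real.cos (3*θ) + Real.sin t) with hW3def
  set w : Fin 3 → ℝ := ![Real.cos θ * Ht, Real.sin θ * Ht, W3] with hwdef
  have hw : HasDerivAt (fun y : ℝ => tF (θ, y)) w t := by
    rw [hasDerivAt_pi]
    intro i
    fin_cases i
    · show HasDerivAt (fun y : ℝ => Real.cos θ * (1 + tH (θ, y))) (Real.cos θ * Ht) t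
      have := ((hasDerivAt_const t (1:ℝ)).add hdHt).const_mul (Real.cos θ)
      exact this.congr_deriv (by ring)
    · show HasDerivAt (fun y : ℝ => Real.sin θ * (1 + tH (θ, y))) (Real.sin θ * Ht) t
      have := ((hasDerivAt_const t (1:ℝ)).add hdHt).const_mul (Real.sin θ)
      exact this.congr_deriv (by ring)
    · show HasDerivAt (fun y : ℝ =>
        (1/8) * tG θ * ((1/8) * Real.sin (2*y) * Real.cos (3*θ) - Real.cos y)) W3 t
      have := (((hsin2.const_mul (1/8)).mul_const (Real.cos (3*θ))).sub
        (Real.hasDerivAt_cos t)).const_mul ((1/8) * tG θ)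
      exact this.congr_deriv (by rw [hW3def]; ring)
  have hFD : HasFDerivAt tF (fderiv ℝ tF (θ, t)) (θ, t) :=
    ((contDiff_tF.differentiable (by simp)) (θ, t)).hasFDerivAt
  have hline1 : HasDerivAt (fun x : ℝ => ((x, t) : ℝ × ℝ)) ((1:ℝ), (0:ℝ)) θ :=
    (hasDerivAt_id θ).prodMk (hasDerivAt_const θ t)
  have hline2 : HasDerivAt (fun y : ℝ => ((θ, y) : ℝ × ℝ)) ((0:ℝ), (1:ℝ)) t :=
    (hasDerivAt_const t θ).prodMk (hasDerivAt_id t)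
  have hveq : fderiv ℝ tF (θ, t) (1, 0) = v :=
    by have hc := hFD.comp_hasDerivAt θ hline1; exact hc.unique hv
  have hweq : fderiv ℝ tF (θ, t) (0, 1) = w :=
    (hFD.comp_hasDerivAt t hline2).unique (hw : HasDerivAt (tF ∘ fun y : ℝ => ((θ, y) : ℝ × ℝ)) w t)
  intro z₁ z₂ hz
  have hsub : fderiv ℝ tF (θ, t) (z₁ - z₂) = 0 := by
    rw [map_sub, hz, sub_self]
  set a : ℝ := z₁.1 - z₂.1 with hadef
  set b : ℝ := z₁.2 - z₂.2 with hbdef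
  have hzz : z₁ - z₂ = ((a, b) : ℝ × ℝ) := rfl
  have hdecomp : ((a, b) : ℝ × ℝ) = a • ((1:ℝ), (0:ℝ)) + b • ((0:ℝ), (1:ℝ)) := by
    ext <;> simp
  have hkey : a • v + b • w = 0 := by
    rw [← hveq, ← hweq, ← (fderiv ℝ tF (θ, t)).map_smul, ← (fderiv ℝ tF (θ, t)).map_smul,
      ← (fderiv ℝ tF (θ, t)).map_add, ← hdecomp, ← hzz]
    exact hsub
  have e0 := congrFun hkey 0
  have e1 := congrFun hkey 1
  have e2 := congrFun hkey 2
  simp only [hvdef, hwdef, Pi.add_apply, Pi.smul_apply, smul_eq_mul,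
    Matrix.cons_val_zero, Matrix.cons_val_one, Matrix.head_cons,
    Matrix.cons_val_two, Matrix.tail_cons, Pi.zero_apply] at e0 e1 e2
  have ha : a * (1 + tH (θ, t)) = 0 := by
    linear_combination (-Real.sin θ) * e0 + Real.cos θ * e1 -
      (a * (1 + tH (θ, t))) * Real.sin_sq_add_cos_sq θ
  have ha0 : a = 0 := by
    rcases mul_eq_zero.mp ha with h | h
    · exact h
    · exact absurd h (tH_bound (θ, t)).ne'
  have hb0 : b = 0 := by
    by_contra hb
    rw [ha0] at e0 e1 e2
    simp only [zero_mul, zero_add] at e0 e1 e2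
    have h0 : Real.cos θ * Ht = 0 := (mul_eq_zero.mp e0).resolve_left hb
    have h1 : Real.sin θ * Ht = 0 := (mul_eq_zero.mp e1).resolve_left hb
    have h2 : W3 = 0 := (mul_eq_zero.mp e2).resolve_left hb
    have hHt0 : Ht = 0 := by
      linear_combination Real.cos θ * h0 + Real.sin θ * h1 - Ht * Real.sin_sq_add_cos_sq θ
    rw [hHtdef] at hHt0
    rw [hW3def] at h2
    have hgne : (1/8 : ℝ) * tG θ ≠ 0 :=
      (mul_pos (by norm_num) (tG_pos θ)).ne'
    have hP : Real.cos (3*θ) * (-Real.sin t) + (1/8) * (2 * Real.cos (2*t)) = 0 :=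
      (mul_eq_zero.mp hHt0).resolve_left hgne
    have hQ : (1/8) * (2 * Real.cos (2*t)) * Real.cos (3*θ) + Real.sin t = 0 :=
      (mul_eq_zero.mp h2).resolve_left hgne
    have hsint : Real.sin t * (1 + Real.cos (3*θ)^2) = 0 := by
      linear_combination hQ - Real.cos (3*θ) * hP
    have hst : Real.sin t = 0 := by
      have hpos : (0:ℝ) < 1 + Real.cos (3*θ)^2 := by positivity
      exact (mul_eq_zero.mp hsint).resolve_right hpos.ne'
    have hc2 : Real.cos (2*t) = 0 := by
      linear_combination 4 * hP + 4 * Real.cos (3*θ) * hst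
    nlinarith [Real.cos_two_mul' t, Real.sin_sq_add_cos_sq t, hst, hc2]
  have h1 : z₁.1 = z₂.1 := by
    have h : z₁.1 - z₂.1 = 0 := ha0
    linarith
  have h2 : z₁.2 = z₂.2 := by
    have h : z₁.2 - z₂.2 = 0 := hb0
    linarith
  exact Prod.ext h1 h2
end

section
/- Let A ⊆ S^n be a subset such that there exists an immersion f : M → ℝ^{n+1} of a nonempty closed oriented n-manifold M with G_f(M) ⊆ A. Then A ∪ (−A) = S^n, where −A = { −x : x ∈ A }. -/
open scoped RealInnerProductSpace Manifold

/-! For a unit vector `u`, the height function `⟪u, f ·⟫` attains its maximum on the compact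
manifold `M` at some `q`. There `u` is orthogonal to the `n`-dimensional image of `df_q`, whose
orthogonal complement in `ℝⁿ⁺¹` is the line spanned by the unit normal `G q`; hence `u = ±G q`. -/

section UnitNormal

variable {E : Type*} [NormedAddCommGroup E] [InnerProductSpace ℝ E]

theorem finrank_orthogonal_range_eq_one {V : Type*} [AddCommGroup V] [Module ℝ V]
    (D : V →ₗ[ℝ] E) (hD : Function.Injective D)
    (hdim : Module.finrank ℝ E = Module.finrank ℝ V + 1) :
    Module.finrank ℝ (LinearMap.range D)ᗮ = 1 := by
  have : FiniteDimensional ℝ E := Module.finite_of_finrank_pos (by omega)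
  have hsum := (LinearMap.range D).finrank_add_finrank_orthogonal
  rw [LinearMap.finrank_range_of_inj hD] at hsum
  omega

theorem eq_or_eq_neg_of_mem_of_finrank_eq_one {K : Submodule ℝ E}
    (hK : Module.finrank ℝ K = 1) {u w : E} (hu : u ∈ K) (hw : w ∈ K)
    (hu1 : ‖u‖ = 1) (hw1 : ‖w‖ = 1) : u = w ∨ u = -w := by
  have hw0 : (⟨w, hw⟩ : K) ≠ 0 := by
    rw [ne_eq, Submodule.mk_eq_zero, ← norm_eq_zero, hw1]
    exact one_ne_zero
  obtain ⟨c, hc⟩ := (finrank_eq_one_iff_of_nonzero' _ hw0).mp hK ⟨u, hu⟩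
  replace hc : c • w = u := congrArg Subtype.val hc
  have hc1 : |c| = 1 := by
    simpa [← hc, norm_smul, hw1] using hu1
  rcases abs_eq zero_le_one |>.mp hc1 with rfl | rfl <;> simp [← hc]

end UnitNormal

section LocalMax

variable {E H M : Type*} [NormedAddCommGroup E] [NormedSpace ℝ E] [TopologicalSpace H]
  {I : ModelWithCorners ℝ E H} [I.Boundaryless] [TopologicalSpace M] [ChartedSpace H M]

theorem IsLocalMax.mfderiv_eq_zero {h : M → ℝ} {q : M} (hmax : IsLocalMax h q) :
    mfderiv I 𝓘(ℝ, ℝ) h q = 0 := by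
  by_cases hd : MDifferentiableAt I 𝓘(ℝ, ℝ) h q
  swap
  · exact mfderiv_zero_of_not_mdifferentiableAt hd
  have hchart : IsLocalMax (h ∘ (extChartAt I q).symm) (extChartAt I q q) := by
    have ht : Filter.Tendsto (extChartAt I q).symm (nhds (extChartAt I q q)) (nhds q) := by
      simpa using (continuousAt_extChartAt_symm (I := I) q).tendsto
    simpa [IsLocalMax, IsMaxFilter] using ht.eventually hmax
  refine (if_pos hd).trans ?_
  rw [ModelWithCorners.Boundaryless.range_eq_univ, fderivWithin_univ]
  exact hchart.fderiv_eq_zero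

theorem inner_mfderiv_eq_zero_of_isLocalMax {F : Type*} [NormedAddCommGroup F]
    [InnerProductSpace ℝ F] {f : M → F} {u : F} {q : M}
    (hf : MDifferentiableAt I 𝓘(ℝ, F) f q) (hmax : IsLocalMax (fun x ↦ ⟪u, f x⟫) q)
    (v : TangentSpace I q) : ⟪u, mfderiv I 𝓘(ℝ, F) f q v⟫ = 0 := by
  have hderiv := ((innerSL ℝ u).hasMFDerivAt.comp q hf.hasMFDerivAt).mfderiv
  have hzero : mfderiv I 𝓘(ℝ, ℝ) (innerSL ℝ u ∘ f) q = 0 := hmax.mfderiv_eq_zero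
  rw [hzero] at hderiv
  exact (DFunLike.congr_fun hderiv v).symm

theorem eq_or_eq_neg_of_isLocalMax_inner {F : Type*} [NormedAddCommGroup F]
    [InnerProductSpace ℝ F] (hdim : Module.finrank ℝ F = Module.finrank ℝ E + 1)
    {f : M → F} {q : M} (hf : MDifferentiableAt I 𝓘(ℝ, F) f q)
    (himm : Function.Injective (mfderiv I 𝓘(ℝ, F) f q))
    {ν u : F} (hν : ∀ v, ⟪ν, mfderiv I 𝓘(ℝ, F) f q v⟫ = 0) (hν1 : ‖ν‖ = 1) (hu1 : ‖u‖ = 1)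
    (hmax : IsLocalMax (fun x ↦ ⟪u, f x⟫) q) : u = ν ∨ u = -ν := by
  set D : E →ₗ[ℝ] F := (mfderiv I 𝓘(ℝ, F) f q).toLinearMap
  have mem_orthogonal_range : ∀ x : F, (∀ v, ⟪x, D v⟫ = 0) → x ∈ (LinearMap.range D)ᗮ := by
    rintro x hx _ ⟨v, rfl⟩
    rw [real_inner_comm]
    exact hx v
  exact eq_or_eq_neg_of_mem_of_finrank_eq_one (finrank_orthogonal_range_eq_one D himm hdim)
    (mem_orthogonal_range u (inner_mfderiv_eq_zero_of_isLocalMax hf hmax)) (mem_orthogonal_range ν hν) hu1 hν1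

end LocalMax

theorem spherical_image_union_neg_eq_sphere_general {n : ℕ}
    {M : Type*} [TopologicalSpace M] [ChartedSpace (EuclideanSpace ℝ (Fin n)) M]
    [CompactSpace M] [Nonempty M]
    (A : Set (EuclideanSpace ℝ (Fin (n + 1))))
    (hA : A ⊆ Metric.sphere (0 : EuclideanSpace ℝ (Fin (n + 1))) 1)
    (f : M → EuclideanSpace ℝ (Fin (n + 1)))
    (hf : ContMDiff (𝓡 n) 𝓘(ℝ, EuclideanSpace ℝ (Fin (n + 1))) 1 f)
    (himm : ∀ q, Function.Injective
      (mfderiv (𝓡 n) 𝓘(ℝ, EuclideanSpace ℝ (Fin (n + 1))) f q))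
    (G : M → EuclideanSpace ℝ (Fin (n + 1)))
    (hGu : ∀ q, ‖G q‖ = 1)
    (hGn : ∀ q (v : TangentSpace (𝓡 n) q),
      ⟪G q, mfderiv (𝓡 n) 𝓘(ℝ, EuclideanSpace ℝ (Fin (n + 1))) f q v⟫ = 0)
    (hGA : ∀ q, G q ∈ A) :
    A ∪ -A = Metric.sphere (0 : EuclideanSpace ℝ (Fin (n + 1))) 1 := by
  refine Set.Subset.antisymm (Set.union_subset hA fun x hx ↦ ?_) fun u hu ↦ ?_
  · simpa using hA hx
  obtain ⟨q, -, hq⟩ := isCompact_univ.exists_isMaxOn Set.univ_nonempty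
    ((innerSL ℝ u).continuous.comp hf.continuous).continuousOn
  have hmax : IsLocalMax (fun x ↦ ⟪u, f x⟫) q := hq.isLocalMax Filter.univ_mem
  rcases eq_or_eq_neg_of_isLocalMax_inner (by simp) ((hf q).mdifferentiableAt one_ne_zero)
    (himm q) (hGn q) (hGu q) (by simpa using hu) hmax with rfl | rfl
  · exact Or.inl (hGA q)
  · exact Or.inr (by simpa using hGA q)

/-- If a nonempty closed oriented `n`-manifold admits an immersion into `ℝⁿ⁺¹` whose Gauss map
(a continuous unit normal field) takes values in `A ⊆ Sⁿ`, then `A ∪ (-A) = Sⁿ`. -/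
theorem spherical_image_union_neg_eq_sphere {n : ℕ}
    {M : Type*} [TopologicalSpace M] [ChartedSpace (EuclideanSpace ℝ (Fin n)) M]
    [IsManifold (𝓡 n) (⊤ : ℕ∞) M] [CompactSpace M] [Nonempty M]
    (A : Set (EuclideanSpace ℝ (Fin (n + 1))))
    (hA : A ⊆ Metric.sphere (0 : EuclideanSpace ℝ (Fin (n + 1))) 1)
    (f : M → EuclideanSpace ℝ (Fin (n + 1)))
    (hf : ContMDiff (𝓡 n) 𝓘(ℝ, EuclideanSpace ℝ (Fin (n + 1))) 1 f)
    (himm : ∀ q, Function.Injective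
      (mfderiv (𝓡 n) 𝓘(ℝ, EuclideanSpace ℝ (Fin (n + 1))) f q))
    (G : M → EuclideanSpace ℝ (Fin (n + 1))) (hGc : Continuous G)
    (hGu : ∀ q, ‖G q‖ = 1)
    (hGn : ∀ q (v : TangentSpace (𝓡 n) q),
      ⟪G q, mfderiv (𝓡 n) 𝓘(ℝ, EuclideanSpace ℝ (Fin (n + 1))) f q v⟫ = 0)
    (hGA : ∀ q, G q ∈ A) :
    A ∪ -A = Metric.sphere (0 : EuclideanSpace ℝ (Fin (n + 1))) 1 :=
  spherical_image_union_neg_eq_sphere_general A hA f hf himm G hGu hGn hGA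
end
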